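/- Under the setup of the maximal-solution splitting iteration (nonsingular M-tensor A, M = P − Q = P̂ − Q̂ splittings of the majorization matrix with P, P̂ nonsingular M-matrices and Q, Q̂ ≥ 0, A = M_tensor − N with N ≥ 0): let (x_k) and (x̂_k) be the respective iterates with x_0 ≥ x̂_0 > 0, A x_0^{m-1} > 0, A x_0^{m-1} ≥ b, A x̂_0^{m-1} > 0, A x̂_0^{m-1} ≥ b. If Q̂ ≤ Q entrywise, then x_k ≥ x̂_k for all k ≥ 0. -/

import Mathlib

open Finset Filter

noncomputable section

/-- Action of an order-(p+1) tensor (p trailing indices):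
`(A x^{p})_i = ∑ a_{i i₂ … i_{p+1}} x_{i₂} ⋯ x_{i_{p+1}}`. -/
def tapp (p n : ℕ) (A : Fin n → (Fin p → Fin n) → ℝ) (x : Fin n → ℝ) : Fin n → ℝ :=
  fun i => ∑ js : Fin p → Fin n, A i js * ∏ j, x (js j)

/-- A `Z`-tensor: all off-diagonal entries are nonpositive. -/
def IsZTensor (p n : ℕ) (A : Fin n → (Fin p → Fin n) → ℝ) : Prop :=
  ∀ i js, (∃ j, js j ≠ i) → A i js ≤ 0

/-- The identity tensor. -/
def identT (p n : ℕ) : Fin n → (Fin p → Fin n) → ℝ :=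
  fun i js => if ∀ j, js j = i then 1 else 0

/-- Spectral radius of a tensor: sup of moduli of (real) eigenvalues. -/
def tensorSpecRad (p n : ℕ) (B : Fin n → (Fin p → Fin n) → ℝ) : ℝ :=
  sSup {r : ℝ | ∃ lam : ℝ, ∃ x : Fin n → ℝ, x ≠ 0 ∧
    (∀ i, tapp p n B x i = lam * x i ^ p) ∧ r = |lam|}

/-- A nonsingular M-tensor: `A = s I − B` with `B ≥ 0` and `s > ρ(B)`. -/
def IsMTensor (p n : ℕ) (A : Fin n → (Fin p → Fin n) → ℝ) : Prop :=
  ∃ s : ℝ, ∃ B : Fin n → (Fin p → Fin n) → ℝ,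
    (∀ i js, 0 ≤ B i js) ∧ tensorSpecRad p n B < s ∧
    ∀ i js, A i js = s * identT p n i js - B i js

/-- The diagonal-part tensor of `A`. -/
def diagT (p n : ℕ) (A : Fin n → (Fin p → Fin n) → ℝ) : Fin n → (Fin p → Fin n) → ℝ :=
  fun i js => if ∀ j, js j = i then A i (fun _ => i) else 0

/-- The majorization matrix of `A`: `M_{ij} = a_{i j … j}`. -/
def majMatrix (p n : ℕ) (A : Fin n → (Fin p → Fin n) → ℝ) : Matrix (Fin n) (Fin n) ℝ :=
  fun i j => A i (fun _ => j)

/-- The "mixed index" part `N = M_tensor − A`: zero on constant trailing tuples,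
`−A` elsewhere. -/
def NPart (p n : ℕ) (A : Fin n → (Fin p → Fin n) → ℝ) : Fin n → (Fin p → Fin n) → ℝ :=
  fun i js => if ∀ j' j'', js j' = js j'' then 0 else -A i js

/-- A nonsingular M-matrix: a Z-matrix with `M y > 0` for some `y > 0`. -/
def IsMMatrix (n : ℕ) (P : Matrix (Fin n) (Fin n) ℝ) : Prop :=
  (∀ i j, i ≠ j → P i j ≤ 0) ∧ ∃ y : Fin n → ℝ, (∀ i, 0 < y i) ∧ ∀ i, 0 < P.mulVec y i

/-- Spectral radius of a real matrix (via its complex spectrum). -/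
def matSpecRad (n : ℕ) (J : Matrix (Fin n) (Fin n) ℝ) : ℝ :=
  sSup {r : ℝ | ∃ μ ∈ spectrum ℂ (J.map (Complex.ofReal ·)), r = ‖μ‖}

/-- Irreducibility of a matrix. -/
def MatIrreducible (n : ℕ) (J : Matrix (Fin n) (Fin n) ℝ) : Prop :=
  ∀ S : Finset (Fin n), S.Nonempty → S ≠ Finset.univ → ∃ i ∈ S, ∃ j, j ∉ S ∧ J i j ≠ 0

/-
Writing `p = m - 1` and `F x = N x^{p} + b`, both iterations have the form
`P (x_{k+1}^{[p]}) = Q (x_k^{[p]}) + F x_k` with `F` monotone on nonnegative vectors, and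
nonsingular M-matrices are inverse-nonnegative, so `P u^{[p]} ≤ P v^{[p]}` forces `u ≤ v`
for `u, v ≥ 0`. Since `A x_0^{p} ≥ b` and `A x^{p} + N x^{p} = (P - Q) x^{[p]}`, this gives
`x_1 ≤ x_0`, and induction shows that `(x_k)` decreases. For the comparison,
`P̂ = P - (Q - Q̂)` yields
`P̂ x̂_{k+1}^{[p]} ≤ Q̂ x_k^{[p]} + F x_k = P̂ x_{k+1}^{[p]} - (Q - Q̂)(x_k^{[p]} - x_{k+1}^{[p]})`,
and the last term is nonnegative because `Q̂ ≤ Q` and `x_{k+1} ≤ x_k`.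
-/

open Matrix

lemma Matrix.mulVec_mono_of_nonneg {ι κ : Type*} [Fintype κ] {M : Matrix ι κ ℝ}
    (hM : ∀ i j, 0 ≤ M i j) {u v : κ → ℝ} (huv : u ≤ v) : M *ᵥ u ≤ M *ᵥ v := fun i =>
  Finset.sum_le_sum fun j _ => mul_le_mul_of_nonneg_left (huv j) (hM i j)

namespace IsMMatrix

variable {n : ℕ} {P : Matrix (Fin n) (Fin n) ℝ}

lemma nonneg_of_mulVec_nonneg (hP : IsMMatrix n P) {d : Fin n → ℝ} (hd : 0 ≤ P *ᵥ d) :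
    0 ≤ d := by
  obtain ⟨hoff, y, hy, hPy⟩ := hP
  by_contra hneg
  obtain ⟨i₁, hi₁⟩ : ∃ i, d i < 0 := by simpa [Pi.le_def] using hneg
  -- `t` is the least multiple of `y` with `d + t y ≥ 0`; that vector vanishes at `i₀`.
  obtain ⟨i₀, -, hmax⟩ :=
    Finset.exists_max_image Finset.univ (fun i => -d i / y i) ⟨i₁, Finset.mem_univ i₁⟩
  set t := -d i₀ / y i₀
  have ht : 0 < t := (div_pos (neg_pos.2 hi₁) (hy i₁)).trans_le (hmax i₁ (Finset.mem_univ _))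
  set z : Fin n → ℝ := d + t • y
  have hz : 0 ≤ z := fun j => by
    have := (div_le_iff₀ (hy j)).1 (hmax j (Finset.mem_univ j))
    simp only [z, Pi.add_apply, Pi.smul_apply, smul_eq_mul, Pi.zero_apply]
    linarith
  have hz₀ : z i₀ = 0 := by
    simp only [z, t, Pi.add_apply, Pi.smul_apply, smul_eq_mul, div_mul_cancel₀ _ (hy i₀).ne']
    ring
  have hpos : 0 < (P *ᵥ z) i₀ := by
    rw [mulVec_add, mulVec_smul, Pi.add_apply, Pi.smul_apply, smul_eq_mul]
    exact add_pos_of_nonneg_of_pos (hd i₀) (mul_pos ht (hPy i₀))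
  have hnonpos : (P *ᵥ z) i₀ ≤ 0 := by
    rw [mulVec, dotProduct]
    refine Finset.sum_nonpos fun j _ => ?_
    rcases eq_or_ne j i₀ with rfl | hj
    · rw [hz₀, mul_zero]
    · exact mul_nonpos_of_nonpos_of_nonneg (hoff i₀ j hj.symm) (hz j)
  exact hpos.not_ge hnonpos

lemma le_of_mulVec_pow_le (hP : IsMMatrix n P) {p : ℕ} (hp : p ≠ 0) {u v : Fin n → ℝ}
    (hu : 0 ≤ u) (hv : 0 ≤ v) (h : P *ᵥ u ^ p ≤ P *ᵥ v ^ p) : u ≤ v := by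
  have hpow : u ^ p ≤ v ^ p := by
    simpa [mulVec_sub] using hP.nonneg_of_mulVec_nonneg (d := v ^ p - u ^ p) (by
      simpa [mulVec_sub] using h)
  exact fun j => (pow_le_pow_iff_left₀ (hu j) (hv j) hp).1 (hpow j)

end IsMMatrix

section Tensor

variable {p n : ℕ}

lemma tapp_mono {T : Fin n → (Fin p → Fin n) → ℝ} (hT : ∀ i js, 0 ≤ T i js) :
    MonotoneOn (tapp p n T) (Set.Ici 0) := fun _ hx _ _ hxy i =>
  Finset.sum_le_sum fun js _ => mul_le_mul_of_nonneg_left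
    (Finset.prod_le_prod (fun j _ => hx (js j)) fun j _ => hxy (js j)) (hT i js)

lemma IsMTensor.NPart_nonneg {A : Fin n → (Fin p → Fin n) → ℝ} (hA : IsMTensor p n A)
    (i : Fin n) (js : Fin p → Fin n) : 0 ≤ NPart p n A i js := by
  obtain ⟨s, B, hB, -, hAsB⟩ := hA
  unfold NPart
  split_ifs with hconst
  · exact le_rfl
  · push Not at hconst
    obtain ⟨j', j'', hne⟩ := hconst
    have : identT p n i js = 0 := if_neg fun hall => hne ((hall j').trans (hall j'').symm)
    simp only [hAsB, this, mul_zero, zero_sub, neg_neg]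
    exact hB i js

lemma tapp_add_tapp_NPart (hp : p ≠ 0) (A : Fin n → (Fin p → Fin n) → ℝ) (x : Fin n → ℝ) :
    tapp p n A x + tapp p n (NPart p n A) x = majMatrix p n A *ᵥ x ^ p := by
  funext i
  let j₀ : Fin p := ⟨0, Nat.pos_of_ne_zero hp⟩
  have hterm : ∀ js : Fin p → Fin n,
      A i js * ∏ j, x (js j) + NPart p n A i js * ∏ j, x (js j)
        = if ∀ j' j'', js j' = js j'' then A i js * ∏ j, x (js j) else 0 := fun js => by
    unfold NPart; split_ifs <;> ring
  simp only [Pi.add_apply, tapp, ← Finset.sum_add_distrib, hterm, ← Finset.sum_filter]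
  -- Constant tuples `js` correspond to their value `js j₀`.
  refine Finset.sum_bij' (fun js _ => js j₀) (fun j _ => fun _ => j)
    (fun _ _ => Finset.mem_univ _) (fun _ _ => by simp) (fun js hjs => ?_) (fun _ _ => rfl)
    (fun js hjs => ?_)
  all_goals
    simp only [Finset.mem_filter, Finset.mem_univ, true_and] at hjs
    have hjs : js = fun _ => js j₀ := funext fun j => hjs j j₀
  · exact hjs.symm
  · rw [hjs]
    simp [majMatrix, Pi.pow_apply]

end Tensor

section SplittingIteration

variable {n p : ℕ} {P Q : Matrix (Fin n) (Fin n) ℝ} {F : (Fin n → ℝ) → Fin n → ℝ}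
  {x : ℕ → Fin n → ℝ}

lemma antitone_splitting_iterate (hP : IsMMatrix n P) (hQ : ∀ i j, 0 ≤ Q i j)
    (hF : MonotoneOn F (Set.Ici 0)) (hp : p ≠ 0) (hx : ∀ k, 0 ≤ x k)
    (hiter : ∀ k, P *ᵥ x (k + 1) ^ p = Q *ᵥ x k ^ p + F (x k))
    (hstart : Q *ᵥ x 0 ^ p + F (x 0) ≤ P *ᵥ x 0 ^ p) : Antitone x := by
  refine antitone_nat_of_succ_le fun k => ?_
  induction k with
  | zero => exact hP.le_of_mulVec_pow_le hp (hx 1) (hx 0) (hiter 0 ▸ hstart)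
  | succ k ih =>
    refine hP.le_of_mulVec_pow_le hp (hx (k + 2)) (hx (k + 1)) ?_
    rw [hiter (k + 1), hiter k]
    exact add_le_add (mulVec_mono_of_nonneg hQ (pow_le_pow_left₀ (hx (k + 1)) ih p))
      (hF (hx (k + 1)) (hx k) ih)

lemma splitting_iterate_le_of_le {Ph Qh : Matrix (Fin n) (Fin n) ℝ} {xh : ℕ → Fin n → ℝ}
    (hPh : IsMMatrix n Ph) (hQh : ∀ i j, 0 ≤ Qh i j) (hQle : ∀ i j, Qh i j ≤ Q i j)
    (hsplit : P - Q = Ph - Qh) (hF : MonotoneOn F (Set.Ici 0)) (hp : p ≠ 0)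
    (hx : ∀ k, 0 ≤ x k) (hxh : ∀ k, 0 ≤ xh k) (hanti : Antitone x)
    (hiter : ∀ k, P *ᵥ x (k + 1) ^ p = Q *ᵥ x k ^ p + F (x k))
    (hiterh : ∀ k, Ph *ᵥ xh (k + 1) ^ p = Qh *ᵥ xh k ^ p + F (xh k))
    (hstart : xh 0 ≤ x 0) (k : ℕ) : xh k ≤ x k := by
  induction k with
  | zero => exact hstart
  | succ k ih =>
    refine hPh.le_of_mulVec_pow_le hp (hxh (k + 1)) (hx (k + 1)) ?_
    have hP : P = Ph + (Q - Qh) := by rw [← sub_add_cancel P Q, hsplit]; abel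
    have hgap : 0 ≤ (Q - Qh) *ᵥ (x k ^ p - x (k + 1) ^ p) := by
      simpa using mulVec_mono_of_nonneg (M := Q - Qh) (fun i j => sub_nonneg.2 (hQle i j))
        (sub_nonneg.2 (pow_le_pow_left₀ (hx (k + 1)) (hanti k.le_succ) p))
    calc Ph *ᵥ xh (k + 1) ^ p
        = Qh *ᵥ xh k ^ p + F (xh k) := hiterh k
      _ ≤ Qh *ᵥ x k ^ p + F (x k) :=
        add_le_add (mulVec_mono_of_nonneg hQh (pow_le_pow_left₀ (hxh k) ih p))
          (hF (hxh k) (hx k) ih)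
      _ = Ph *ᵥ x (k + 1) ^ p - (Q - Qh) *ᵥ (x k ^ p - x (k + 1) ^ p) := by
        rw [eq_sub_iff_add_eq, eq_sub_of_add_eq' (hiter k).symm, hP]
        simp only [add_mulVec, sub_mulVec, mulVec_sub]
        abel
      _ ≤ Ph *ᵥ x (k + 1) ^ p := sub_le_self _ hgap

end SplittingIteration

theorem stmt13_general (m n : ℕ) (hm : 2 ≤ m) (A : Fin n → (Fin (m-1) → Fin n) → ℝ)
    (hA : IsMTensor (m-1) n A) (b : Fin n → ℝ)
    (P Q Ph Qh : Matrix (Fin n) (Fin n) ℝ)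
    (hP : IsMMatrix n P) (hPh : IsMMatrix n Ph)
    (hQ : ∀ i j, 0 ≤ Q i j) (hQh : ∀ i j, 0 ≤ Qh i j)
    (hsplit : majMatrix (m-1) n A = P - Q)
    (hsplith : majMatrix (m-1) n A = Ph - Qh)
    (x xh : ℕ → Fin n → ℝ)
    (hx0le : xh 0 ≤ x 0)
    (hAx0b : b ≤ tapp (m-1) n A (x 0))
    (hxpos : ∀ k, 0 ≤ x k) (hxhpos : ∀ k, 0 ≤ xh k)
    (hiter : ∀ k i, P.mulVec (fun j => x (k+1) j ^ (m-1)) i =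
      Q.mulVec (fun j => x k j ^ (m-1)) i +
        tapp (m-1) n (NPart (m-1) n A) (x k) i + b i)
    (hiterh : ∀ k i, Ph.mulVec (fun j => xh (k+1) j ^ (m-1)) i =
      Qh.mulVec (fun j => xh k j ^ (m-1)) i +
        tapp (m-1) n (NPart (m-1) n A) (xh k) i + b i)
    (hQle : ∀ i j, Qh i j ≤ Q i j) :
    ∀ k, xh k ≤ x k := by
  have hp : m - 1 ≠ 0 := by omega
  set F : (Fin n → ℝ) → Fin n → ℝ := fun u => tapp (m-1) n (NPart (m-1) n A) u + b
  have hF : MonotoneOn F (Set.Ici 0) := fun u hu v hv huv =>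
    add_le_add_left (tapp_mono hA.NPart_nonneg hu hv huv) b
  have hiter' : ∀ k, P *ᵥ x (k + 1) ^ (m-1) = Q *ᵥ x k ^ (m-1) + F (x k) := fun k =>
    funext fun i => (hiter k i).trans (add_assoc _ _ _)
  have hiterh' : ∀ k, Ph *ᵥ xh (k + 1) ^ (m-1) = Qh *ᵥ xh k ^ (m-1) + F (xh k) := fun k =>
    funext fun i => (hiterh k i).trans (add_assoc _ _ _)
  have hstart : Q *ᵥ x 0 ^ (m-1) + F (x 0) ≤ P *ᵥ x 0 ^ (m-1) :=
    calc Q *ᵥ x 0 ^ (m-1) + F (x 0)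
        ≤ Q *ᵥ x 0 ^ (m-1) + (tapp (m-1) n (NPart (m-1) n A) (x 0) + tapp (m-1) n A (x 0)) :=
          add_le_add_right (add_le_add_right hAx0b _) _
      _ = P *ᵥ x 0 ^ (m-1) := by
        rw [add_comm (tapp _ _ _ _), tapp_add_tapp_NPart hp, hsplit, sub_mulVec,
          add_sub_cancel]
  exact splitting_iterate_le_of_le hPh hQh hQle (hsplit.symm.trans hsplith) hF hp hxpos hxhpos
    (antitone_splitting_iterate hP hQ hF hp hxpos hiter' hstart) hiter' hiterh' hx0le

/-- comparison of two splittings for the decreasing (maximal-solution)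
iteration: with `x₀ ≥ x̂₀ > 0`, `A x₀^{m-1} > 0`, `A x₀^{m-1} ≥ b` (and likewise for
`x̂₀`), if `Q̂ ≤ Q` entrywise then `x_k ≥ x̂_k` for all `k`. -/
theorem stmt13 (m n : ℕ) (hm : 2 ≤ m) (A : Fin n → (Fin (m-1) → Fin n) → ℝ)
    (hA : IsMTensor (m-1) n A) (b : Fin n → ℝ)
    (P Q Ph Qh : Matrix (Fin n) (Fin n) ℝ)
    (hP : IsMMatrix n P) (hPh : IsMMatrix n Ph)
    (hQ : ∀ i j, 0 ≤ Q i j) (hQh : ∀ i j, 0 ≤ Qh i j)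
    (hsplit : majMatrix (m-1) n A = P - Q)
    (hsplith : majMatrix (m-1) n A = Ph - Qh)
    (x xh : ℕ → Fin n → ℝ)
    (hx00 : ∀ i, 0 < xh 0 i) (hx0le : xh 0 ≤ x 0)
    (hAx0 : ∀ i, 0 < tapp (m-1) n A (x 0) i) (hAx0b : b ≤ tapp (m-1) n A (x 0))
    (hAxh0 : ∀ i, 0 < tapp (m-1) n A (xh 0) i) (hAxh0b : b ≤ tapp (m-1) n A (xh 0))
    (hxpos : ∀ k, 0 ≤ x k) (hxhpos : ∀ k, 0 ≤ xh k)
    (hiter : ∀ k i, P.mulVec (fun j => x (k+1) j ^ (m-1)) i =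
      Q.mulVec (fun j => x k j ^ (m-1)) i +
        tapp (m-1) n (NPart (m-1) n A) (x k) i + b i)
    (hiterh : ∀ k i, Ph.mulVec (fun j => xh (k+1) j ^ (m-1)) i =
      Qh.mulVec (fun j => xh k j ^ (m-1)) i +
        tapp (m-1) n (NPart (m-1) n A) (xh k) i + b i)
    (hQle : ∀ i j, Qh i j ≤ Q i j) :
    ∀ k, xh k ≤ x k :=
  stmt13_general m n hm A hA b P Q Ph Qh hP hPh hQ hQh hsplit hsplith x xh hx0le hAx0b hxpos hxhpos
    hiter hiterh hQle

end
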